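/- Let Ω₁, Ω₂ be positive diagonal matrices, φ a real diagonal matrix, A = (M + φ) − (N + φ) a splitting of A ∈ ℝ^{n×n} with A invertible, Ψ ≥ 0, and V a positive diagonal matrix such that (Ω₂ + ⟨M_{Ω₁}⟩ + |φ_{Ω₁}|)V is strictly diagonally dominant with positive diagonal entries. If componentwise (Ω₂ + ⟨M_{Ω₁}⟩ + |φ_{Ω₁}|)Ve > (|N_{Ω₁} + φ_{Ω₁}| + |Ω₂ − A_{Ω₁}| + 2|A|Ψ|A⁻¹|Ω₂)Ve, where e = (1,…,1)ᵀ, then ρ(L̄) < 1 for L̄ = (Ω₂ + ⟨M_{Ω₁}⟩ + |φ_{Ω₁}|)⁻¹(|N_{Ω₁} + φ_{Ω₁}| + |Ω₂ − A_{Ω₁}| + 2|A|Ψ|A⁻¹|Ω₂). -/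

import Mathlib

open Matrix Filter Topology

noncomputable section

variable {n : ℕ}

/-- entrywise absolute value of a vector -/
def vecAbs (x : Fin n → ℝ) : Fin n → ℝ := fun i => |x i|

/-- entrywise absolute value of a matrix -/
def matAbs (A : Matrix (Fin n) (Fin n) ℝ) : Matrix (Fin n) (Fin n) ℝ :=
  Matrix.of fun i j => |A i j|

/-- positive diagonal matrix -/
def PosDiag (Ω : Matrix (Fin n) (Fin n) ℝ) : Prop := Ω.IsDiag ∧ ∀ i, 0 < Ω i i

/-- comparison matrix ⟨A⟩ -/
def compMat (A : Matrix (Fin n) (Fin n) ℝ) : Matrix (Fin n) (Fin n) ℝ :=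
  Matrix.of fun i j => if i = j then |A i j| else -|A i j|

/-- Z-matrix: nonpositive off-diagonal entries -/
def IsZmat (A : Matrix (Fin n) (Fin n) ℝ) : Prop := ∀ i j, i ≠ j → A i j ≤ 0

/-- nonsingular M-matrix: a Z-matrix, invertible, with entrywise nonnegative inverse -/
def IsMmat (A : Matrix (Fin n) (Fin n) ℝ) : Prop :=
  IsZmat A ∧ IsUnit A ∧ ∀ i j, 0 ≤ A⁻¹ i j

/-- H₊-matrix: comparison matrix is a nonsingular M-matrix, positive diagonal entries -/
def IsHplus (A : Matrix (Fin n) (Fin n) ℝ) : Prop :=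
  IsMmat (compMat A) ∧ ∀ i, 0 < A i i

/-- P-matrix: all principal minors are positive -/
def IsPmat (A : Matrix (Fin n) (Fin n) ℝ) : Prop :=
  ∀ s : Finset (Fin n),
    0 < (A.submatrix (fun i : {i // i ∈ s} => (i : Fin n))
          (fun i : {i // i ∈ s} => (i : Fin n))).det

/-- spectral radius, via the complex spectrum -/
def specRad (A : Matrix (Fin n) (Fin n) ℝ) : ℝ :=
  sSup ((fun μ : ℂ => ‖μ‖) '' spectrum ℂ (A.map Complex.ofReal))

/-- spectral (operator 2-) norm -/
def spec2Norm (A : Matrix (Fin n) (Fin n) ℝ) : ℝ :=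
  ‖Matrix.toEuclideanCLM (𝕜 := ℝ) A‖

/-- strict diagonal dominance -/
def SDD (A : Matrix (Fin n) (Fin n) ℝ) : Prop :=
  ∀ i, (∑ j ∈ Finset.univ.erase i, |A i j|) < |A i i|

/-- `z` solves the implicit complementarity problem ICP(q, A, ζ) -/
def SolvesICP (A : Matrix (Fin n) (Fin n) ℝ) (q : Fin n → ℝ)
    (ζ : (Fin n → ℝ) → (Fin n → ℝ)) (z : Fin n → ℝ) : Prop :=
  (∀ i, 0 ≤ (A.mulVec z + q) i) ∧ (∀ i, 0 ≤ (z - ζ z) i) ∧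
    (z - ζ z) ⬝ᵥ (A.mulVec z + q) = 0

/-- the sequences `x`, `z` are produced by Method 3.1 -/
def Method31 (A M N φ Ω₁ Ω₂ : Matrix (Fin n) (Fin n) ℝ) (q : Fin n → ℝ)
    (ζ : (Fin n → ℝ) → (Fin n → ℝ)) (γ : ℝ) (x z : ℕ → Fin n → ℝ) : Prop :=
  (∀ k, A *ᵥ z k = γ⁻¹ • (Ω₂ *ᵥ (vecAbs (x k) - x k)) - q) ∧
  (∀ k, x (k+1) = (Ω₂ + M * Ω₁ + φ * Ω₁)⁻¹ *ᵥ
      ((N * Ω₁ + φ * Ω₁) *ᵥ x k + (Ω₂ - A * Ω₁) *ᵥ vecAbs (x k)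
        - γ • (A *ᵥ ζ (z k)) - γ • q))

lemma mapC_mul {X Y : Matrix (Fin n) (Fin n) ℝ} :
    (X * Y).map Complex.ofReal = X.map Complex.ofReal * Y.map Complex.ofReal :=
  Matrix.map_mul (f := Complex.ofRealHom)

lemma mul_entry_nonneg {X Y : Matrix (Fin n) (Fin n) ℝ} (hX : ∀ i j, 0 ≤ X i j)
    (hY : ∀ i j, 0 ≤ Y i j) : ∀ i j, 0 ≤ (X * Y) i j := by
  intro i j
  rw [Matrix.mul_apply]
  exact Finset.sum_nonneg fun k _ => mul_nonneg (hX i k) (hY k j)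

theorem stmt14 (A M N φ Ω₁ Ω₂ Ψ V : Matrix (Fin n) (Fin n) ℝ)
    (hΩ₁ : PosDiag Ω₁) (hΩ₂ : PosDiag Ω₂) (hφ : φ.IsDiag)
    (hsplit : A = (M + φ) - (N + φ)) (hAinv : IsUnit A)
    (hΨ : ∀ i j, 0 ≤ Ψ i j)
    (hV : PosDiag V)
    (hsdd : SDD ((Ω₂ + compMat (M * Ω₁) + matAbs (φ * Ω₁)) * V))
    (hsddpos : ∀ i, 0 < ((Ω₂ + compMat (M * Ω₁) + matAbs (φ * Ω₁)) * V) i i)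
    (hdom : ∀ i,
      ((matAbs (N * Ω₁ + φ * Ω₁) + matAbs (Ω₂ - A * Ω₁)
          + (2 : ℝ) • (matAbs A * Ψ * matAbs A⁻¹ * Ω₂)) *ᵥ (V *ᵥ fun _ => (1 : ℝ))) i
        < ((Ω₂ + compMat (M * Ω₁) + matAbs (φ * Ω₁)) *ᵥ (V *ᵥ fun _ => (1 : ℝ))) i) :
    specRad ((Ω₂ + compMat (M * Ω₁) + matAbs (φ * Ω₁))⁻¹ *
      (matAbs (N * Ω₁ + φ * Ω₁) + matAbs (Ω₂ - A * Ω₁)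
        + (2 : ℝ) • (matAbs A * Ψ * matAbs A⁻¹ * Ω₂))) < 1 := by
  classical
  set D := Ω₂ + compMat (M * Ω₁) + matAbs (φ * Ω₁) with hDdef
  set B := matAbs (N * Ω₁ + φ * Ω₁) + matAbs (Ω₂ - A * Ω₁)
      + (2 : ℝ) • (matAbs A * Ψ * matAbs A⁻¹ * Ω₂) with hBdef
  set P := D * V with hPdef
  set Q := B * V with hQdef
  -- entrywise nonnegativity facts
  have hVnn : ∀ i j, 0 ≤ V i j := by
    intro i j
    by_cases h : i = j
    · subst h; exact (hV.2 i).le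
    · rw [hV.1 h]
  have hΩ₂nn : ∀ i j, 0 ≤ Ω₂ i j := by
    intro i j
    by_cases h : i = j
    · subst h; exact (hΩ₂.2 i).le
    · rw [hΩ₂.1 h]
  have hBnn : ∀ i j, 0 ≤ B i j := by
    intro i j
    have h3 : ∀ i j, 0 ≤ (matAbs A * Ψ * matAbs A⁻¹ * Ω₂) i j :=
      mul_entry_nonneg (mul_entry_nonneg (mul_entry_nonneg
        (fun i j => abs_nonneg _) hΨ) (fun i j => abs_nonneg _)) hΩ₂nn
    simp only [hBdef, Matrix.add_apply, Matrix.smul_apply, smul_eq_mul, matAbs, Matrix.of_apply]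
    have := h3 i j
    positivity
  have hQnn : ∀ i j, 0 ≤ Q i j := mul_entry_nonneg hBnn hVnn
  -- off-diagonal signs
  have hDoff : ∀ i j, i ≠ j → D i j ≤ 0 := by
    intro i j hij
    have hφΩ : (φ * Ω₁) i j = 0 := by
      rw [Matrix.mul_apply]
      refine Finset.sum_eq_zero fun k _ => ?_
      by_cases hk : k = j
      · subst hk; rw [hφ hij, zero_mul]
      · rw [hΩ₁.1 hk, mul_zero]
    simp only [hDdef, Matrix.add_apply, compMat, matAbs, Matrix.of_apply, if_neg hij,
      hΩ₂.1 hij, hφΩ, abs_zero, add_zero, zero_add]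
    simp [neg_nonpos]
  have hPoff : ∀ i j, i ≠ j → P i j ≤ 0 := by
    intro i j hij
    have : P i j = D i j * V j j := by
      rw [hPdef, Matrix.mul_apply]
      refine Finset.sum_eq_single j (fun k _ hk => by rw [hV.1 hk, mul_zero]) (by simp)
    rw [this]
    exact mul_nonpos_of_nonpos_of_nonneg (hDoff i j hij) (hVnn j j)
  -- row sums
  have hmv : ∀ (X : Matrix (Fin n) (Fin n) ℝ) i, (X *ᵥ fun _ => (1:ℝ)) i = ∑ j, X i j := by
    intro X i; simp [Matrix.mulVec, dotProduct]
  have hrow : ∀ i, ∑ j, Q i j < ∑ j, P i j := by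
    intro i
    have := hdom i
    rw [Matrix.mulVec_mulVec, Matrix.mulVec_mulVec] at this
    rw [← hmv, ← hmv]
    exact this
  have hSQnn : ∀ i, 0 ≤ ∑ j, Q i j := fun i => Finset.sum_nonneg fun j _ => hQnn i j
  -- determinants
  have hdetP : P.det ≠ 0 := by
    apply det_ne_zero_of_sum_row_lt_diag
    intro k
    simpa [Real.norm_eq_abs] using hsdd k
  have hdetD : D.det ≠ 0 := by
    intro h
    exact hdetP (by rw [hPdef, Matrix.det_mul, h, zero_mul])
  -- key spectral claim
  have key : ∀ μ ∈ spectrum ℂ ((D⁻¹ * B).map Complex.ofReal), ‖μ‖ < 1 := by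
    intro μ hμ
    by_contra hge
    push_neg at hge
    have hge' : 1 ≤ ‖μ‖ := by exact hge
    set Dc := D.map Complex.ofReal with hDc
    set Bc := B.map Complex.ofReal with hBc
    set Vc := V.map Complex.ofReal with hVc
    have hE : (D⁻¹).map Complex.ofReal * Dc = 1 := by
      rw [hDc, ← mapC_mul,
        Matrix.nonsing_inv_mul D (isUnit_iff_ne_zero.mpr hdetD)]
      exact Matrix.map_one _ Complex.ofReal_zero Complex.ofReal_one
    have hdet0 : (μ • (1 : Matrix (Fin n) (Fin n) ℂ) - (D⁻¹ * B).map Complex.ofReal).det = 0 := by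
      rw [spectrum.mem_iff, Matrix.isUnit_iff_isUnit_det, isUnit_iff_ne_zero, not_not,
        Algebra.algebraMap_eq_smul_one] at hμ
      exact hμ
    have hmap1 : (D⁻¹ * B).map Complex.ofReal = (D⁻¹).map Complex.ofReal * Bc :=
      mapC_mul
    have hfact : μ • (1 : Matrix (Fin n) (Fin n) ℂ) - (D⁻¹ * B).map Complex.ofReal
        = (D⁻¹).map Complex.ofReal * (μ • Dc - Bc) := by
      rw [Matrix.mul_sub, Matrix.mul_smul, hE, hmap1]
    have hdetE : ((D⁻¹).map Complex.ofReal).det ≠ 0 := by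
      have : ((D⁻¹).map Complex.ofReal).det * Dc.det = 1 := by
        rw [← Matrix.det_mul, hE, Matrix.det_one]
      exact left_ne_zero_of_mul_eq_one this
    have hdet2 : (μ • Dc - Bc).det = 0 := by
      have := hdet0
      rw [hfact, Matrix.det_mul] at this
      exact (mul_eq_zero.mp this).resolve_left hdetE
    set W := (μ • Dc - Bc) * Vc with hWdef
    have hdetW : W.det = 0 := by rw [hWdef, Matrix.det_mul, hdet2, zero_mul]
    have hW : ∀ i j, W i j = μ * (P i j : ℂ) - (Q i j : ℂ) := by
      intro i j
      have : W = μ • (P.map Complex.ofReal) - Q.map Complex.ofReal := by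
        rw [hWdef, Matrix.sub_mul, Matrix.smul_mul, hPdef, hQdef, mapC_mul, mapC_mul]
      rw [this]
      simp [Matrix.sub_apply, Matrix.smul_apply, Matrix.map_apply, smul_eq_mul]
    -- W is SDD, contradiction
    apply det_ne_zero_of_sum_row_lt_diag (A := W) ?_ hdetW
    intro i
    have hPii : 0 < P i i := hsddpos i
    have hQii : 0 ≤ Q i i := hQnn i i
    have hPS : ∑ j ∈ Finset.univ.erase i, |P i j| = P i i - ∑ j, P i j := by
      rw [Finset.sum_congr rfl (fun j hj => abs_of_nonpos
        (hPoff i j (Finset.mem_erase.mp hj).1.symm)),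
        Finset.sum_neg_distrib, Finset.sum_erase_eq_sub (Finset.mem_univ i)]
      ring
    have hQS : ∑ j ∈ Finset.univ.erase i, Q i j = (∑ j, Q i j) - Q i i :=
      Finset.sum_erase_eq_sub (Finset.mem_univ i)
    have hSP : ∑ j, Q i j < ‖μ‖ * ∑ j, P i j := by
      refine lt_of_lt_of_le (hrow i) ?_
      have hSPnn : 0 ≤ ∑ j, P i j := le_of_lt (lt_of_le_of_lt (hSQnn i) (hrow i))
      nlinarith
    calc ∑ j ∈ Finset.univ.erase i, ‖W i j‖
        ≤ ∑ j ∈ Finset.univ.erase i, (‖μ‖ * |P i j| + Q i j) := by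
          refine Finset.sum_le_sum fun j _ => ?_
          rw [hW i j]
          refine (norm_sub_le _ _).trans ?_
          rw [norm_mul, Complex.norm_real, Complex.norm_real, Real.norm_eq_abs,
            Real.norm_eq_abs, abs_of_nonneg (hQnn i j)]
      _ = ‖μ‖ * (P i i - ∑ j, P i j) + ((∑ j, Q i j) - Q i i) := by
          rw [Finset.sum_add_distrib, ← Finset.mul_sum, hPS, hQS]
      _ < ‖μ‖ * P i i - Q i i := by nlinarith
      _ ≤ ‖W i i‖ := by
          rw [hW i i]
          refine le_trans ?_ (norm_sub_norm_le _ _)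
          rw [norm_mul, Complex.norm_real, Complex.norm_real, Real.norm_eq_abs,
            Real.norm_eq_abs, abs_of_pos hPii, abs_of_nonneg hQii]
  -- conclusion
  rcases Set.eq_empty_or_nonempty
      ((fun μ : ℂ => ‖μ‖) '' spectrum ℂ ((D⁻¹ * B).map Complex.ofReal)) with h | h
  · unfold specRad
    rw [h, Real.sSup_empty]
    norm_num
  · have hfin : ((fun μ : ℂ => ‖μ‖) ''
        spectrum ℂ ((D⁻¹ * B).map Complex.ofReal)).Finite :=
      (Matrix.finite_spectrum _).image _
    have hmem := h.csSup_mem hfin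
    obtain ⟨μ, hμ, hEq⟩ := hmem
    unfold specRad
    rw [← hEq]
    exact key μ hμ
end
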